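/- The Petersen graph is not Hamiltonian: it contains no cycle passing through all 10 vertices. -/

import Mathlib

/-!
Reading a Hamiltonian cycle from its second vertex on gives a simple path through all ten
vertices whose last vertex is adjacent to its first. Simple paths can be enumerated by extending
them one vertex at a time, and a kernel-checked enumeration shows that none of the ten-vertex
paths of the Petersen graph closes up in this way.
-/

/-- The Petersen graph as the Kneser graph K(5,2): vertices are 2-element
subsets of a 5-element set, adjacent iff disjoint. -/
def petersen : SimpleGraph {s : Finset (Fin 5) // s.card = 2} where
  Adj s t := Disjoint s.val t.val
  symm := ⟨fun s t h => h.symm⟩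
  loopless := ⟨by
    intro s h
    rw [disjoint_self] at h
    have h2 := s.2
    rw [h] at h2
    simp at h2⟩

namespace SimpleGraph

variable {V : Type*} [DecidableEq V] (G : SimpleGraph V) [DecidableRel G.Adj]

-- A multiset, since distinct lists have distinct extensions and nothing needs deduplicating.
def pathLists (s : Finset V) : ℕ → Multiset (List V)
  | 0 => {[]}
  | n + 1 => (pathLists s n).bind fun l =>
      (s.filter fun x => (∀ y ∈ l.head?, G.Adj x y) ∧ x ∉ l).val.map (· :: l)

variable {G}

theorem mem_pathLists {s : Finset V} {n : ℕ} {l : List V} :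
    l ∈ G.pathLists s n ↔ l.length = n ∧ l.IsChain G.Adj ∧ l.Nodup ∧ ∀ x ∈ l, x ∈ s := by
  induction n generalizing l with
  | zero => cases l <;> simp [pathLists]
  | succ n ih =>
    cases l with
    | nil => simp [pathLists]
    | cons x l =>
      simp only [pathLists, Multiset.mem_bind, Multiset.mem_map, Finset.mem_val, Finset.mem_filter,
        List.cons.injEq, ih, List.length_cons, List.isChain_cons, List.nodup_cons, List.mem_cons,
        forall_eq_or_imp]
      grind

theorem Walk.IsHamiltonianCycle.exists_mem_pathLists [Fintype V] {v : V} {p : G.Walk v v}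
    (hp : p.IsHamiltonianCycle) :
    ∃ l ∈ G.pathLists Finset.univ (Fintype.card V), ∃ a ∈ l.getLast?, ∃ b ∈ l.head?, G.Adj a b := by
  cases p with
  | nil => exact (hp.isCycle.ne_nil rfl).elim
  | @cons _ w _ hadj q =>
    have hlen : q.support.length = Fintype.card V := by
      rw [q.length_support, ← hp.length_eq, Walk.length_cons]
    refine ⟨q.support, mem_pathLists.mpr ⟨hlen, q.isChain_adj_support, hp.isCycle.support_nodup,
      by simp⟩, v, ?_, w, ?_, hadj⟩
    · rw [Option.mem_def, List.getLast?_eq_some_getLast q.support_ne_nil, q.getLast_support]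
    · rw [Option.mem_def, List.head?_eq_some_head q.support_ne_nil, q.head_support]

theorem not_isHamiltonianCycle_of_forall_pathLists [Fintype V]
    (h : ∀ l ∈ G.pathLists Finset.univ (Fintype.card V),
      ∀ a ∈ l.getLast?, ∀ b ∈ l.head?, ¬ G.Adj a b)
    {v : V} (p : G.Walk v v) : ¬ p.IsHamiltonianCycle := fun hp =>
  let ⟨l, hl, a, ha, b, hb, hba⟩ := hp.exists_mem_pathLists
  h l hl a ha b hb hba

end SimpleGraph

instance : DecidableRel petersen.Adj :=
  fun s t => inferInstanceAs (Decidable (Disjoint s.val t.val))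

/-- The Petersen graph is not Hamiltonian. -/
theorem petersen_not_hamiltonian :
    ¬ ∃ (v : {s : Finset (Fin 5) // s.card = 2}) (p : petersen.Walk v v),
        p.IsHamiltonianCycle := by
  rintro ⟨v, p, hp⟩
  exact petersen.not_isHamiltonianCycle_of_forall_pathLists (by decide +kernel) p hp
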